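/- (Geometric decay in generations for Carleson families) Let σ be a positive locally finite Borel measure on ℝⁿ, let 𝒟 be a dyadic grid, and let 𝓕 ⊆ 𝒟 be a σ-Carleson collection with constant C₀, i.e. Σ_{F′ ∈ 𝓕 : F′ ⊆ F} σ(F′) ≤ C₀ σ(F) for every F ∈ 𝓕. For F ∈ 𝓕 let 𝔠_𝓕(F) denote the maximal members of 𝓕 strictly contained in F, and define the k-th generation below F by 𝔠_𝓕^{(0)}(F) := {F} and 𝔠_𝓕^{(k+1)}(F) := ⋃_{F′ ∈ 𝔠_𝓕^{(k)}(F)} 𝔠_𝓕(F′). Then there exist constants C₁ > 0 and ε > 0, depending only on C₀, such that Σ_{F′ ∈ 𝔠_𝓕^{(k)}(F)} σ(F′) ≤ (C₁ 2^{−εk})² σ(F) for all F ∈ 𝓕 and all k ≥ 0. -/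

import Mathlib

open MeasureTheory
open scoped ENNReal NNReal

noncomputable section

/-- An axis-parallel half-open cube in `ℝⁿ`, given by its corner `a` and side length `l`. -/
structure QCube (n : ℕ) where
  a : Fin n → ℝ
  l : ℝ

/-- The half-open cube as a subset of `ℝⁿ`. -/
def QCube.pts {n : ℕ} (Q : QCube n) : Set (EuclideanSpace ℝ (Fin n)) :=
  {x | ∀ i, Q.a i ≤ x i ∧ x i < Q.a i + Q.l}

/-- The dyadic grid on `ℝⁿ` obtained by translating the standard grid by `t`. -/
def dyadicGrid {n : ℕ} (t : Fin n → ℝ) : Set (QCube n) :=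
  {Q | ∃ (k : ℤ) (m : Fin n → ℤ),
    Q = ⟨fun i => t i + (2:ℝ) ^ (-k) * (m i : ℝ), (2:ℝ) ^ (-k)⟩}

/-- `𝓕` is a `σ`-Carleson collection with constant `C₀`:
`Σ_{F'∈𝓕, F'⊆F} σ(F') ≤ C₀ σ(F)` for all `F ∈ 𝓕`. -/
def IsCarleson {n : ℕ} (σ : Measure (EuclideanSpace ℝ (Fin n))) (C₀ : ℝ)
    (F𝓕 : Set (QCube n)) : Prop :=
  ∀ F ∈ F𝓕, (∑' G : {G : QCube n // G ∈ F𝓕 ∧ G.pts ⊆ F.pts}, σ (G : QCube n).pts)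
    ≤ ENNReal.ofReal C₀ * σ F.pts

/-- `𝔠_𝓕(F)`: the maximal members of `𝓕` strictly contained in `F`. -/
def FChildren {n : ℕ} (F𝓕 : Set (QCube n)) (F : QCube n) : Set (QCube n) :=
  {G | G ∈ F𝓕 ∧ G.pts ⊂ F.pts ∧
    ∀ H ∈ F𝓕, H.pts ⊂ F.pts → G.pts ⊆ H.pts → H.pts ⊆ G.pts}

/-- `𝔠_𝓕^{(k)}(F)`: the `k`-th generation of `𝓕` below `F`. -/
def FGen {n : ℕ} (F𝓕 : Set (QCube n)) (F : QCube n) : ℕ → Set (QCube n)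
  | 0 => {F}
  | k + 1 => ⋃ G ∈ FGen F𝓕 F k, FChildren F𝓕 G

/-!
Let `S_k(F)` be the `σ`-mass of the `k`-th generation below `F`. The children of a cube are
pairwise disjoint dyadic cubes inside it, so `S_k(F)` is non-increasing in `k`. Distinct
generations below `F` are disjoint subfamilies of `{F' ∈ 𝓕 : F' ⊆ F}`, so the Carleson condition
gives `m S_m(F) ≤ S_1(F) + ⋯ + S_m(F) ≤ C₀ σ(F)`. For `m ≥ 2 C₀` the mass therefore halves every
`m` generations, and `S_k(F) ≤ 2^{-⌊k/m⌋} σ(F) ≤ (2 · 2^{-k/(2m)})² σ(F)`.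
-/

namespace QCube

variable {n : ℕ}

lemma pts_eq_preimage_pi (Q : QCube n) :
    Q.pts = WithLp.ofLp ⁻¹' Set.univ.pi fun i => Set.Ico (Q.a i) (Q.a i + Q.l) := by
  ext x; simp [QCube.pts]

lemma measurableSet_pts (Q : QCube n) : MeasurableSet Q.pts := by
  rw [pts_eq_preimage_pi]
  exact (WithLp.measurable_ofLp 2 _) (MeasurableSet.univ_pi fun _ => measurableSet_Ico)

lemma pts_nonempty {Q : QCube n} (hl : 0 < Q.l) : Q.pts.Nonempty :=
  ⟨WithLp.toLp 2 Q.a, fun _ => ⟨le_rfl, by simpa using hl⟩⟩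

lemma eq_of_pts_eq [Nonempty (Fin n)] {Q Q' : QCube n} (hl : 0 < Q.l) (hl' : 0 < Q'.l)
    (h : Q.pts = Q'.pts) : Q = Q' := by
  rw [pts_eq_preimage_pi, pts_eq_preimage_pi] at h
  have hpi := Set.preimage_injective.mpr (WithLp.ofLp_surjective 2) h
  have hIco (i : Fin n) : Set.Ico (Q.a i) (Q.a i + Q.l) = Set.Ico (Q'.a i) (Q'.a i + Q'.l) := by
    have hne : ∀ {P : QCube n}, 0 < P.l →
        (Set.univ.pi fun i => Set.Ico (P.a i) (P.a i + P.l)).Nonempty := fun hP =>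
      Set.univ_pi_nonempty_iff.mpr fun i => Set.nonempty_Ico.mpr (by linarith)
    rw [← Set.eval_image_univ_pi (hne hl), ← Set.eval_image_univ_pi (hne hl'), hpi]
  have ha (i : Fin n) := (Set.Ico_eq_Ico_iff (.inl (by linarith))).mp (hIco i)
  obtain ⟨i₀⟩ := ‹Nonempty (Fin n)›
  cases Q; cases Q'
  simp only [QCube.mk.injEq]
  exact ⟨funext fun i => (ha i).1, by linarith [ha i₀]⟩

end QCube

section DyadicGrid

variable {n : ℕ} {t : Fin n → ℝ}

lemma side_pos_of_mem_dyadicGrid {Q : QCube n} (hQ : Q ∈ dyadicGrid t) : 0 < Q.l := by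
  obtain ⟨k, m, rfl⟩ := hQ
  positivity

lemma floor_div_two_zpow_sub_natCast (y : ℝ) (k : ℤ) (d : ℕ) :
    ⌊y / 2 ^ (-(k - d))⌋ = ⌊y / 2 ^ (-k)⌋ / 2 ^ d := by
  have h : (2 : ℝ) ^ (-(k - d)) = 2 ^ (-k) * ((2 ^ d : ℕ) : ℝ) := by
    rw [neg_sub, sub_eq_add_neg, add_comm, zpow_add₀ two_ne_zero]
    norm_cast
  rw [h, ← div_div, Int.floor_div_natCast]
  norm_cast

lemma mem_pts_dyadic_iff {k : ℤ} {m : Fin n → ℤ} {x : EuclideanSpace ℝ (Fin n)} :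
    x ∈ (⟨fun i => t i + (2:ℝ) ^ (-k) * (m i : ℝ), (2:ℝ) ^ (-k)⟩ : QCube n).pts ↔
      ∀ i, ⌊(x i - t i) / 2 ^ (-k)⌋ = m i := by
  have h2 : (0 : ℝ) < 2 ^ (-k) := by positivity
  refine forall_congr' fun i => ?_
  rw [Int.floor_eq_iff, le_div_iff₀ h2, div_lt_iff₀ h2]
  constructor <;> rintro ⟨h, h'⟩ <;> constructor <;> linarith

lemma pts_subset_of_mem_dyadicGrid {Q Q' : QCube n} (hQ : Q ∈ dyadicGrid t)
    (hQ' : Q' ∈ dyadicGrid t) (hl : Q.l ≤ Q'.l) (hQQ' : (Q.pts ∩ Q'.pts).Nonempty) :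
    Q.pts ⊆ Q'.pts := by
  obtain ⟨k, m, rfl⟩ := hQ
  obtain ⟨k', m', rfl⟩ := hQ'
  obtain ⟨d, rfl⟩ : ∃ d : ℕ, k' = k - d := by
    have : k' ≤ k := by simpa using (zpow_le_zpow_iff_right₀ one_lt_two).mp hl
    exact ⟨(k - k').toNat, by omega⟩
  obtain ⟨x, hx, hx'⟩ := hQQ'
  intro y hy
  rw [mem_pts_dyadic_iff] at hx hx' hy ⊢
  intro i
  -- the coarse index of a point is the fine index divided by `2 ^ d`
  rw [floor_div_two_zpow_sub_natCast, hy, ← hx, ← floor_div_two_zpow_sub_natCast, hx']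

end DyadicGrid

section Children

variable {n : ℕ} {t : Fin n → ℝ} {F𝓕 : Set (QCube n)}

lemma pts_eq_of_mem_FChildren (hgrid : F𝓕 ⊆ dyadicGrid t) {F G G' : QCube n}
    (hG : G ∈ FChildren F𝓕 F) (hG' : G' ∈ FChildren F𝓕 F) (hl : G.l ≤ G'.l)
    (hGG' : (G.pts ∩ G'.pts).Nonempty) : G.pts = G'.pts :=
  have hsub := pts_subset_of_mem_dyadicGrid (hgrid hG.1) (hgrid hG'.1) hl hGG'
  hsub.antisymm (hG.2.2 G' hG'.1 hG'.2.1 hsub)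

lemma FChildren_pairwiseDisjoint (hgrid : F𝓕 ⊆ dyadicGrid t) (F : QCube n) :
    (FChildren F𝓕 F).PairwiseDisjoint QCube.pts := by
  intro G hG G' hG' hne
  rw [Function.onFun, Set.disjoint_iff_inter_eq_empty, ← Set.not_nonempty_iff_eq_empty]
  intro hGG'
  have hpts : G.pts = G'.pts := by
    rcases le_total G.l G'.l with hl | hl
    · exact pts_eq_of_mem_FChildren hgrid hG hG' hl hGG'
    · exact (pts_eq_of_mem_FChildren hgrid hG' hG hl (Set.inter_comm _ _ ▸ hGG')).symm
  cases isEmpty_or_nonempty (Fin n)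
  · -- in dimension zero every cube is all of `ℝ⁰`, so `F` has no children
    obtain ⟨x, -, hx⟩ := Set.exists_of_ssubset hG.2.1
    exact hx isEmptyElim
  · exact hne (QCube.eq_of_pts_eq (side_pos_of_mem_dyadicGrid (hgrid hG.1))
      (side_pos_of_mem_dyadicGrid (hgrid hG'.1)) hpts)

end Children

section Generations

variable {n : ℕ} {F𝓕 : Set (QCube n)}

lemma FGen_subset {F : QCube n} (hF : F ∈ F𝓕) : ∀ k, FGen F𝓕 F k ⊆ F𝓕
  | 0 => by simpa [FGen]
  | k + 1 => by
    simp only [FGen, Set.iUnion₂_subset_iff]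
    exact fun _ _ _ hG => hG.1

lemma pts_subset_of_mem_FGen : ∀ {k : ℕ} {F G : QCube n}, G ∈ FGen F𝓕 F k → G.pts ⊆ F.pts
  | 0, _, _, hG => by rw [hG]
  | k + 1, _, _, hG => by
    obtain ⟨H, hH, hGH⟩ := Set.mem_iUnion₂.mp hG
    exact hGH.2.1.subset.trans (pts_subset_of_mem_FGen hH)

lemma pts_ssubset_of_mem_FGen_succ {k : ℕ} {F G : QCube n} (hG : G ∈ FGen F𝓕 F (k + 1)) :
    G.pts ⊂ F.pts := by
  obtain ⟨H, hH, hGH⟩ := Set.mem_iUnion₂.mp hG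
  exact hGH.2.1.trans_subset (pts_subset_of_mem_FGen hH)

lemma FGen_add (F : QCube n) (a : ℕ) :
    ∀ b, FGen F𝓕 F (a + b) = ⋃ G ∈ FGen F𝓕 F a, FGen F𝓕 G b
  | 0 => by simp [FGen]
  | b + 1 => by
    rw [← add_assoc, FGen, FGen_add F a b]
    ext H
    simp only [FGen, Set.mem_iUnion, exists_prop]
    grind

lemma FGen_pairwiseDisjoint (hchild : ∀ F, (FChildren F𝓕 F).PairwiseDisjoint QCube.pts)
    (F : QCube n) : ∀ k, (FGen F𝓕 F k).PairwiseDisjoint QCube.pts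
  | 0 => Set.pairwiseDisjoint_singleton _ _
  | k + 1 => by
    refine Set.PairwiseDisjoint.biUnion ?_ fun G _ => hchild G
    refine (FGen_pairwiseDisjoint hchild F k).mono_on fun G _ => ?_
    exact Set.iUnion₂_subset fun H hH => hH.2.1.subset

lemma FGen_disjoint_of_lt (hchild : ∀ F, (FChildren F𝓕 F).PairwiseDisjoint QCube.pts)
    (hne : ∀ G ∈ F𝓕, G.pts.Nonempty) {F : QCube n} (hF : F ∈ F𝓕)
    {j j' : ℕ} (hjj' : j < j') : Disjoint (FGen F𝓕 F j) (FGen F𝓕 F j') := by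
  -- a member of generation `j'` lies strictly inside a member of generation `j`, which is
  -- disjoint from every other member of generation `j`
  obtain ⟨d, rfl⟩ := Nat.exists_eq_add_of_lt hjj'
  rw [Set.disjoint_left]
  intro H hHj hHj'
  rw [add_assoc, FGen_add] at hHj'
  obtain ⟨G, hG, hHG⟩ := Set.mem_iUnion₂.mp hHj'
  have hssub := pts_ssubset_of_mem_FGen_succ hHG
  have hdisj := FGen_pairwiseDisjoint hchild F j hHj hG (fun h => hssub.ne (congrArg _ h))
  exact (hne H (FGen_subset hF j hHj)).ne_empty
    (disjoint_self.mp (hdisj.mono_right hssub.subset))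

end Generations

section Mass

variable {n : ℕ} {F𝓕 : Set (QCube n)} (σ : Measure (EuclideanSpace ℝ (Fin n)))

def genMass (F𝓕 : Set (QCube n)) (F : QCube n) (k : ℕ) : ℝ≥0∞ :=
  ∑' G : FGen F𝓕 F k, σ (G : QCube n).pts

lemma genMass_zero (F : QCube n) : genMass σ F𝓕 F 0 = σ F.pts :=
  tsum_singleton F fun G => σ G.pts

lemma tsum_measure_FChildren_le (hchild : ∀ F, (FChildren F𝓕 F).PairwiseDisjoint QCube.pts)
    (F : QCube n) : ∑' G : FChildren F𝓕 F, σ (G : QCube n).pts ≤ σ F.pts :=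
  calc ∑' G : FChildren F𝓕 F, σ (G : QCube n).pts
      ≤ σ (⋃ G : FChildren F𝓕 F, (G : QCube n).pts) :=
        tsum_meas_le_meas_iUnion_of_disjoint σ (fun G => G.1.measurableSet_pts)
          fun G G' hGG' => hchild F G.2 G'.2 (Subtype.coe_ne_coe.mpr hGG')
    _ ≤ σ F.pts := measure_mono (Set.iUnion_subset fun G => G.2.2.1.subset)

lemma genMass_antitone (hchild : ∀ F, (FChildren F𝓕 F).PairwiseDisjoint QCube.pts)
    (F : QCube n) : Antitone (genMass σ F𝓕 F) :=
  antitone_nat_of_succ_le fun k =>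
    calc genMass σ F𝓕 F (k + 1)
        ≤ ∑' G : FGen F𝓕 F k, ∑' H : FChildren F𝓕 (G : QCube n), σ (H : QCube n).pts :=
          ENNReal.tsum_biUnion_le_tsum (fun Q : QCube n => σ Q.pts) _ _
      _ ≤ genMass σ F𝓕 F k := ENNReal.tsum_le_tsum fun _ => tsum_measure_FChildren_le σ hchild _

variable {σ} {C₀ : ℝ}

lemma sum_genMass_le_of_isCarleson
    (hchild : ∀ F, (FChildren F𝓕 F).PairwiseDisjoint QCube.pts)
    (hne : ∀ G ∈ F𝓕, G.pts.Nonempty) (hC : IsCarleson σ C₀ F𝓕) {F : QCube n} (hF : F ∈ F𝓕)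
    (m : ℕ) : ∑ j ∈ Finset.range m, genMass σ F𝓕 F (j + 1) ≤ ENNReal.ofReal C₀ * σ F.pts := by
  have hdisj : (Finset.range m : Set ℕ).PairwiseDisjoint fun j => FGen F𝓕 F (j + 1) :=
    fun j _ j' _ hjj' => (lt_or_gt_of_ne hjj').elim
      (fun h => FGen_disjoint_of_lt hchild hne hF (Nat.succ_lt_succ h))
      (fun h => (FGen_disjoint_of_lt hchild hne hF (Nat.succ_lt_succ h)).symm)
  have hsub : (⋃ j ∈ (Finset.range m : Set ℕ), FGen F𝓕 F (j + 1)) ⊆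
      {G | G ∈ F𝓕 ∧ G.pts ⊆ F.pts} :=
    Set.iUnion₂_subset fun j _ G hG => ⟨FGen_subset hF _ hG, pts_subset_of_mem_FGen hG⟩
  calc ∑ j ∈ Finset.range m, genMass σ F𝓕 F (j + 1)
      = ∑' G : ⋃ j ∈ (Finset.range m : Set ℕ), FGen F𝓕 F (j + 1), σ (G : QCube n).pts := by
        rw [ENNReal.tsum_biUnion' (f := fun G : QCube n => σ G.pts) hdisj]
        exact (Finset.tsum_subtype (Finset.range m) fun j => genMass σ F𝓕 F (j + 1)).symm
    _ ≤ ∑' G : {G : QCube n // G ∈ F𝓕 ∧ G.pts ⊆ F.pts}, σ (G : QCube n).pts :=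
        ENNReal.tsum_mono_subtype (fun G : QCube n => σ G.pts) hsub
    _ ≤ ENNReal.ofReal C₀ * σ F.pts := hC F hF

end Mass

section Decay

variable {n : ℕ} {F𝓕 : Set (QCube n)} {σ : Measure (EuclideanSpace ℝ (Fin n))} {C₀ : ℝ}

lemma genMass_add_le (F : QCube n) (a b : ℕ) :
    genMass σ F𝓕 F (a + b) ≤ ∑' G : FGen F𝓕 F a, genMass σ F𝓕 G b := by
  rw [genMass, FGen_add]
  exact ENNReal.tsum_biUnion_le_tsum (fun Q : QCube n => σ Q.pts) _ _

lemma genMass_le_half (hchild : ∀ F, (FChildren F𝓕 F).PairwiseDisjoint QCube.pts)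
    (hne : ∀ G ∈ F𝓕, G.pts.Nonempty) (hC : IsCarleson σ C₀ F𝓕) {m : ℕ} (hm0 : 0 < m)
    (hm : 2 * C₀ ≤ m) {F : QCube n} (hF : F ∈ F𝓕) :
    genMass σ F𝓕 F m ≤ 2⁻¹ * σ F.pts := by
  have hC₀m : ENNReal.ofReal C₀ ≤ m * 2⁻¹ := by
    rw [ENNReal.ofReal_le_iff_le_toReal (ENNReal.mul_ne_top (by simp) (by simp))]
    simp only [ENNReal.toReal_mul, ENNReal.toReal_natCast, ENNReal.toReal_inv,
      ENNReal.toReal_ofNat]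
    linarith
  refine (ENNReal.mul_le_mul_iff_right (a := m) (by simpa using hm0.ne') (by simp)).mp ?_
  calc (m : ℝ≥0∞) * genMass σ F𝓕 F m = ∑ _j ∈ Finset.range m, genMass σ F𝓕 F m := by simp
    _ ≤ ∑ j ∈ Finset.range m, genMass σ F𝓕 F (j + 1) :=
        Finset.sum_le_sum fun j hj => genMass_antitone σ hchild F (Finset.mem_range.mp hj)
    _ ≤ ENNReal.ofReal C₀ * σ F.pts := sum_genMass_le_of_isCarleson hchild hne hC hF m
    _ ≤ m * (2⁻¹ * σ F.pts) := by rw [← mul_assoc]; gcongr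

lemma genMass_mul_le (hchild : ∀ F, (FChildren F𝓕 F).PairwiseDisjoint QCube.pts)
    (hne : ∀ G ∈ F𝓕, G.pts.Nonempty) (hC : IsCarleson σ C₀ F𝓕) {m : ℕ} (hm0 : 0 < m)
    (hm : 2 * C₀ ≤ m) {F : QCube n} (hF : F ∈ F𝓕) :
    ∀ q : ℕ, genMass σ F𝓕 F (q * m) ≤ 2⁻¹ ^ q * σ F.pts
  | 0 => by simp [genMass_zero]
  | q + 1 =>
    calc genMass σ F𝓕 F ((q + 1) * m)
        ≤ ∑' G : FGen F𝓕 F (q * m), genMass σ F𝓕 G m := by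
          rw [Nat.succ_mul]; exact genMass_add_le F _ _
      _ ≤ ∑' G : FGen F𝓕 F (q * m), 2⁻¹ * σ (G : QCube n).pts :=
          ENNReal.tsum_le_tsum fun G => genMass_le_half hchild hne hC hm0 hm (FGen_subset hF _ G.2)
      _ = 2⁻¹ * genMass σ F𝓕 F (q * m) := ENNReal.tsum_mul_left
      _ ≤ 2⁻¹ ^ (q + 1) * σ F.pts := by
          rw [pow_succ', mul_assoc]
          gcongr
          exact genMass_mul_le hchild hne hC hm0 hm hF q

end Decay

lemma inv_two_pow_div_le_sq {m : ℕ} (hm : 0 < m) (k : ℕ) :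
    (2⁻¹ : ℝ) ^ (k / m) ≤ (2 * 2 ^ (-(1 / (2 * m : ℝ)) * k)) ^ 2 := by
  have hkm : (k : ℝ) / m < (k / m : ℕ) + 1 := by
    have h : (k : ℝ) < (k / m : ℕ) * m + m := by exact_mod_cast Nat.lt_div_mul_add hm
    rw [div_lt_iff₀ (Nat.cast_pos.mpr hm)]
    linarith
  calc (2⁻¹ : ℝ) ^ (k / m) = 2 ^ (-((k / m : ℕ) : ℝ)) := by
        rw [Real.rpow_neg zero_le_two, Real.rpow_natCast, inv_pow]
    _ ≤ 2 ^ (2 + -((k : ℝ) / m)) := Real.rpow_le_rpow_of_exponent_le one_le_two (by linarith)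
    _ = (2 * 2 ^ (-(1 / (2 * m : ℝ)) * k)) ^ 2 := by
        rw [Real.rpow_add two_pos, Real.rpow_two, mul_pow, ← Real.rpow_mul_natCast zero_le_two]
        congr 2
        push_cast
        field_simp

theorem statement13 (C₀ : ℝ) :
    ∃ C₁ ε : ℝ, 0 < C₁ ∧ 0 < ε ∧
      ∀ (n : ℕ) (t : Fin n → ℝ) (σ : Measure (EuclideanSpace ℝ (Fin n))),
        IsLocallyFiniteMeasure σ →
      ∀ F𝓕 : Set (QCube n), F𝓕 ⊆ dyadicGrid t → IsCarleson σ C₀ F𝓕 →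
      ∀ F ∈ F𝓕, ∀ k : ℕ,
        (∑' G : FGen F𝓕 F k, σ (G : QCube n).pts)
          ≤ ENNReal.ofReal ((C₁ * 2 ^ (-ε * (k : ℝ))) ^ 2) * σ F.pts := by
  obtain ⟨m, hm0, hm⟩ : ∃ m : ℕ, 0 < m ∧ 2 * C₀ ≤ m :=
    ⟨⌈2 * C₀⌉₊ + 1, Nat.succ_pos _, by push_cast; linarith [Nat.le_ceil (2 * C₀)]⟩
  refine ⟨2, 1 / (2 * m), two_pos, by positivity, ?_⟩
  intro n t σ _ F𝓕 hgrid hC F hF k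
  have hchild := FChildren_pairwiseDisjoint hgrid
  have hne : ∀ G ∈ F𝓕, G.pts.Nonempty := fun G hG =>
    QCube.pts_nonempty (side_pos_of_mem_dyadicGrid (hgrid hG))
  calc genMass σ F𝓕 F k ≤ genMass σ F𝓕 F (k / m * m) :=
        genMass_antitone σ hchild F (Nat.div_mul_le_self k m)
    _ ≤ 2⁻¹ ^ (k / m) * σ F.pts := genMass_mul_le hchild hne hC hm0 hm hF _
    _ ≤ ENNReal.ofReal ((2 * 2 ^ (-(1 / (2 * m : ℝ)) * k)) ^ 2) * σ F.pts := by
        gcongr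
        rw [← ENNReal.ofReal_ofNat 2, ← ENNReal.ofReal_inv_of_pos two_pos,
          ← ENNReal.ofReal_pow (by norm_num)]
        exact ENNReal.ofReal_le_ofReal (inv_two_pow_div_le_sq hm0 k)
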